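/- arXiv:1701.02900 — 7 statements merged into one kernel-verified Lean document; each statement's English description precedes it below -/
import Mathlib

section
/- Suppose the code σ₂ on {1,…,n₂} is not padding-invariant, i.e., there exist indices j ≠ j' and k, k' ≥ 0 such that σ₂(j) followed by k zero bits equals σ₂(j') followed by k' zero bits. Then for any prefix code σ₁ on {1,…,n₁} and any width L for which some index i satisfies ℓ(σ₁(i)) + max(ℓ(σ₂(j)), ℓ(σ₂(j'))) ≤ L, the Construction-0 entry encoding is not injective on successfully encoded pairs: the distinct pairs (i,j) and (i,j') are both encoded successfully and are mapped to the same L-bit string. -/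
/-- If the code `σ₂` is not padding-invariant, witnessed by indices
`j ≠ j'` and padding amounts `k, k'` with `σ₂ j ++ 0^k = σ₂ j' ++ 0^k'`, then for any
prefix code `σ₁` and any width `L` for which some index `i` satisfies
`ℓ(σ₁ i) + max (ℓ(σ₂ j)) (ℓ(σ₂ j')) ≤ L`, the Construction-0 entry encoding is not
injective on successfully encoded pairs: the distinct pairs `(i,j)` and `(i,j')` are
both encoded successfully and are mapped to the same `L`-bit string. -/
theorem stmt1 (L n₁ n₂ : ℕ)
    (σ₁ : Fin n₁ → List Bool) (σ₂ : Fin n₂ → List Bool)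
    (hpre : ∀ i j : Fin n₁, i ≠ j → ¬ (σ₁ i <+: σ₁ j))
    (j j' : Fin n₂) (hjj : j ≠ j') (k k' : ℕ)
    (hpad : σ₂ j ++ List.replicate k false = σ₂ j' ++ List.replicate k' false)
    (i : Fin n₁)
    (hi : (σ₁ i).length + max (σ₂ j).length (σ₂ j').length ≤ L) :
    (σ₁ i).length + (σ₂ j).length ≤ L ∧
    (σ₁ i).length + (σ₂ j').length ≤ L ∧
    σ₁ i ++ σ₂ j ++ List.replicate (L - (σ₁ i).length - (σ₂ j).length) false
      = σ₁ i ++ σ₂ j' ++ List.replicate (L - (σ₁ i).length - (σ₂ j').length) false := by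
  set a := σ₂ j with ha
  set b := σ₂ j' with hb
  set s := (σ₁ i).length with hs
  have hla : s + a.length ≤ L := le_trans (by gcongr; exact le_max_left _ _) hi
  have hlb : s + b.length ≤ L := le_trans (by gcongr; exact le_max_right _ _) hi
  refine ⟨hla, hlb, ?_⟩
  have hlen : a.length + k = b.length + k' := by
    have := congrArg List.length hpad
    simpa using this
  set t := L - s - a.length with ht
  set t' := L - s - b.length with ht'
  have key : a ++ List.replicate (t + k) false = b ++ List.replicate (t' + k) false := by
    have h1 : a ++ List.replicate (k + t) false = b ++ List.replicate (k' + t) false := by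
      rw [List.replicate_add, List.replicate_add, ← List.append_assoc, ← List.append_assoc,
        hpad]
    have h2 : k' + t = k + t' := by omega
    rw [h2] at h1
    rw [Nat.add_comm t k, Nat.add_comm t' k]
    exact h1
  have key2 : (a ++ List.replicate t false) ++ List.replicate k false
      = (b ++ List.replicate t' false) ++ List.replicate k false := by
    rw [List.append_assoc, List.append_assoc, ← List.replicate_add, ← List.replicate_add]
    exact key
  have := List.append_cancel_right key2
  rw [List.append_assoc, List.append_assoc, this]
end

section
/- Let p = (p₁,…,p_{n₁}) and q = (q₁,…,q_{n₂}) be probability vectors of positive reals, each summing to 1 and arranged in non-increasing order, and let L ≥ 1. For any length functions ℓ₁ : {1,…,n₁} → ℕ⁺ ∪ {∞} and ℓ₂ : {1,…,n₂} → ℕ⁺ ∪ {∞} each satisfying Kraft's inequality Σᵢ 2^{−ℓ(i)} ≤ 1 (with 2^{−∞} := 0), there exist length functions ℓ₁', ℓ₂' satisfying Kraft's inequality that are non-decreasing in the index (with ∞ treated as the largest value, so that unassigned indices form a final segment) such that Σᵢ Σⱼ pᵢ qⱼ 𝟙[ℓ₁'(i) + ℓ₂'(j) ≤ L] ≥ Σᵢ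 Σⱼ pᵢ qⱼ 𝟙[ℓ₁(i) + ℓ₂(j) ≤ L]. In particular, for any entry distribution and any width L, there exists a monotone optimal coding scheme. -/
/-!
Sorting a length function so that the most probable elements get the shortest codewords
permutes its Kraft terms, so Kraft's inequality survives. With the other field fixed, the
success probability is `∑ᵢ pᵢ · g(ℓ₁ i)` where `g l` is the `q`-mass of the `j` with
`l + ℓ₂ j ≤ L`; `g` is antitone, so by the rearrangement inequality pairing the
non-increasing `p` with the non-decreasing sorted lengths can only increase the sum.
Sorting one field and then the other gives the monotone scheme.
-/

open Finset

/-- The Kraft term `2^{-l}` of an (extended) codeword length `l ∈ ℕ ∪ {∞}`,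
with the convention `2^{-∞} = 0`. -/
noncomputable def kraftTerm (l : ℕ∞) : ℝ :=
  if l = ⊤ then 0 else ((2 : ℝ) ^ l.toNat)⁻¹

section SuccessProb

variable {ι κ : Type*} [Fintype ι] [Fintype κ]

noncomputable def successProb (p : ι → ℝ) (q : κ → ℝ) (ℓ₁ : ι → ℕ∞) (ℓ₂ : κ → ℕ∞) (L : ℕ∞) :
    ℝ :=
  ∑ i, ∑ j, if ℓ₁ i + ℓ₂ j ≤ L then p i * q j else 0

theorem successProb_comm (p : ι → ℝ) (q : κ → ℝ) (ℓ₁ : ι → ℕ∞) (ℓ₂ : κ → ℕ∞) (L : ℕ∞) :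
    successProb p q ℓ₁ ℓ₂ L = successProb q p ℓ₂ ℓ₁ L := by
  unfold successProb
  rw [sum_comm]
  simp only [add_comm (ℓ₁ _), mul_comm (p _)]

theorem successProb_eq_sum_mul (p : ι → ℝ) (q : κ → ℝ) (ℓ₁ : ι → ℕ∞) (ℓ₂ : κ → ℕ∞)
    (L : ℕ∞) :
    successProb p q ℓ₁ ℓ₂ L = ∑ i, p i * ∑ j, if ℓ₁ i + ℓ₂ j ≤ L then q j else 0 := by
  simp only [successProb, mul_sum, mul_ite, mul_zero]

theorem antitone_sum_ite_add_le {q : κ → ℝ} (hq : ∀ j, 0 ≤ q j) (ℓ : κ → ℕ∞) (L : ℕ∞) :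
    Antitone fun l : ℕ∞ => ∑ j, if l + ℓ j ≤ L then q j else 0 := by
  intro a b hab
  refine sum_le_sum fun j _ => ?_
  by_cases hb : b + ℓ j ≤ L
  · rw [if_pos hb, if_pos ((add_le_add_left hab _).trans hb)]
  · rw [if_neg hb]
    split_ifs
    exacts [hq j, le_rfl]

end SuccessProb

theorem Antitone.sum_mul_comp_le_sum_mul_comp_sort {n : ℕ} {α : Type*} [LinearOrder α]
    {p : Fin n → ℝ} (hp : Antitone p) {g : α → ℝ} (hg : Antitone g) (f : Fin n → α) :
    ∑ i, p i * g (f i) ≤ ∑ i, p i * g (f (Tuple.sort f i)) := by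
  have hmonovary : Monovary p (g ∘ f ∘ Tuple.sort f) :=
    hp.monovary (hg.comp_monotone (Tuple.monotone_sort f))
  simpa using hmonovary.sum_mul_comp_perm_le_sum_mul (σ := (Tuple.sort f)⁻¹)

theorem successProb_le_sort_left {n : ℕ} {κ : Type*} [Fintype κ] {p : Fin n → ℝ}
    (hp : Antitone p) {q : κ → ℝ} (hq : ∀ j, 0 ≤ q j) (ℓ₁ : Fin n → ℕ∞) (ℓ₂ : κ → ℕ∞)
    (L : ℕ∞) : successProb p q ℓ₁ ℓ₂ L ≤ successProb p q (ℓ₁ ∘ Tuple.sort ℓ₁) ℓ₂ L := by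
  rw [successProb_eq_sum_mul, successProb_eq_sum_mul]
  exact hp.sum_mul_comp_le_sum_mul_comp_sort (antitone_sum_ite_add_le hq ℓ₂ L) ℓ₁

theorem stmt2_general (n₁ n₂ : ℕ) (p : Fin n₁ → ℝ) (q : Fin n₂ → ℝ)
    (hp : ∀ i, 0 < p i) (hq : ∀ j, 0 < q j)
    (hpm : ∀ i j : Fin n₁, i ≤ j → p j ≤ p i)
    (hqm : ∀ i j : Fin n₂, i ≤ j → q j ≤ q i)
    (L : ℕ)
    (ℓ₁ : Fin n₁ → ℕ∞) (ℓ₂ : Fin n₂ → ℕ∞)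
    (h₁pos : ∀ i, 1 ≤ ℓ₁ i) (h₂pos : ∀ j, 1 ≤ ℓ₂ j)
    (hk₁ : ∑ i, kraftTerm (ℓ₁ i) ≤ 1) (hk₂ : ∑ j, kraftTerm (ℓ₂ j) ≤ 1) :
    ∃ (ℓ₁' : Fin n₁ → ℕ∞) (ℓ₂' : Fin n₂ → ℕ∞),
      (∀ i, 1 ≤ ℓ₁' i) ∧ (∀ j, 1 ≤ ℓ₂' j) ∧
      (∑ i, kraftTerm (ℓ₁' i) ≤ 1) ∧ (∑ j, kraftTerm (ℓ₂' j) ≤ 1) ∧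
      Monotone ℓ₁' ∧ Monotone ℓ₂' ∧
      (∑ i, ∑ j, if ℓ₁ i + ℓ₂ j ≤ (L : ℕ∞) then p i * q j else 0) ≤
        ∑ i, ∑ j, if ℓ₁' i + ℓ₂' j ≤ (L : ℕ∞) then p i * q j else 0 := by
  set σ₁ := Tuple.sort ℓ₁
  set σ₂ := Tuple.sort ℓ₂
  refine ⟨ℓ₁ ∘ σ₁, ℓ₂ ∘ σ₂, fun i => h₁pos _, fun j => h₂pos _,
    (Equiv.sum_comp σ₁ fun i => kraftTerm (ℓ₁ i)).trans_le hk₁,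
    (Equiv.sum_comp σ₂ fun j => kraftTerm (ℓ₂ j)).trans_le hk₂,
    Tuple.monotone_sort ℓ₁, Tuple.monotone_sort ℓ₂, ?_⟩
  calc successProb p q ℓ₁ ℓ₂ L
      ≤ successProb p q (ℓ₁ ∘ σ₁) ℓ₂ L :=
        successProb_le_sort_left (fun i j => hpm i j) (fun j => (hq j).le) ℓ₁ ℓ₂ L
    _ = successProb q p ℓ₂ (ℓ₁ ∘ σ₁) L := successProb_comm ..
    _ ≤ successProb q p (ℓ₂ ∘ σ₂) (ℓ₁ ∘ σ₁) L :=
        successProb_le_sort_left (fun i j => hqm i j) (fun i => (hp i).le) ℓ₂ _ L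
    _ = successProb p q (ℓ₁ ∘ σ₁) (ℓ₂ ∘ σ₂) L := successProb_comm ..

/-- For any entry distribution (probability vectors `p`, `q` of positive
reals, each summing to `1` and non-increasing) and any width `L ≥ 1`, and any pair of
length functions `ℓ₁, ℓ₂` (with values in `ℕ⁺ ∪ {∞}`) satisfying Kraft's inequality,
there exist Kraft-feasible length functions `ℓ₁', ℓ₂'` that are non-decreasing in the
index (with `∞` largest, so unassigned indices form a final segment) whose success
probability is at least as large: there exists a monotone optimal coding scheme. -/
theorem stmt2 (n₁ n₂ : ℕ) (p : Fin n₁ → ℝ) (q : Fin n₂ → ℝ)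
    (hp : ∀ i, 0 < p i) (hq : ∀ j, 0 < q j)
    (hps : ∑ i, p i = 1) (hqs : ∑ j, q j = 1)
    (hpm : ∀ i j : Fin n₁, i ≤ j → p j ≤ p i)
    (hqm : ∀ i j : Fin n₂, i ≤ j → q j ≤ q i)
    (L : ℕ) (hL : 1 ≤ L)
    (ℓ₁ : Fin n₁ → ℕ∞) (ℓ₂ : Fin n₂ → ℕ∞)
    (h₁pos : ∀ i, 1 ≤ ℓ₁ i) (h₂pos : ∀ j, 1 ≤ ℓ₂ j)
    (hk₁ : ∑ i, kraftTerm (ℓ₁ i) ≤ 1) (hk₂ : ∑ j, kraftTerm (ℓ₂ j) ≤ 1) :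
    ∃ (ℓ₁' : Fin n₁ → ℕ∞) (ℓ₂' : Fin n₂ → ℕ∞),
      (∀ i, 1 ≤ ℓ₁' i) ∧ (∀ j, 1 ≤ ℓ₂' j) ∧
      (∑ i, kraftTerm (ℓ₁' i) ≤ 1) ∧ (∑ j, kraftTerm (ℓ₂' j) ≤ 1) ∧
      Monotone ℓ₁' ∧ Monotone ℓ₂' ∧
      (∑ i, ∑ j, if ℓ₁ i + ℓ₂ j ≤ (L : ℕ∞) then p i * q j else 0) ≤
        ∑ i, ∑ j, if ℓ₁' i + ℓ₂' j ≤ (L : ℕ∞) then p i * q j else 0 :=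
  stmt2_general n₁ n₂ p q hp hq hpm hqm L ℓ₁ ℓ₂ h₁pos h₂pos hk₁ hk₂
end

section
/- Let p = (p₁,…,p_{n₁}) and q = (q₁,…,q_{n₂}) be probability vectors of positive reals, each summing to 1 and arranged in non-increasing order, and let L ≥ 1. Let σ₁ be a prefix code defined on a subset dom(σ₁) ⊆ {1,…,n₁} with all codeword lengths at most L, and let σ₂ be any code on {1,…,n₂} such that the Construction-0 entry encoding (with pairs whose first index lies outside dom(σ₁) failing) is injective on successfully encoded pairs. Then the success probability satisfies P_success ≤ Σ_{i ∈ dom(σ₁)} pᵢ · Σ_{j=1}^{min(n₂, 2^{L−ℓ(σ₁(i))})} qⱼ. -/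
lemma fin_strictMono_le {c n : ℕ} (f : Fin c → Fin n) (hf : StrictMono f) :
    ∀ m : Fin c, (m : ℕ) ≤ (f m : ℕ) := by
  have key : ∀ t, ∀ ht : t < c, t ≤ (f ⟨t, ht⟩ : ℕ) := by
    intro t
    induction t with
    | zero => intro _; exact Nat.zero_le _
    | succ t ih =>
      intro ht
      have h1 := ih (Nat.lt_of_succ_lt ht)
      have h2 : f ⟨t, Nat.lt_of_succ_lt ht⟩ < f ⟨t + 1, ht⟩ := hf (by simp [Fin.lt_def])
      have := Fin.lt_def.mp h2
      omega
  intro m; have := key m.val m.isLt; simpa using this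

lemma sum_le_sum_first {n k : ℕ} (q : Fin n → ℝ) (hq0 : ∀ j, 0 ≤ q j)
    (hqm : ∀ i j : Fin n, i ≤ j → q j ≤ q i) (T : Finset (Fin n)) (hT : T.card ≤ k) :
    ∑ j ∈ T, q j ≤ ∑ j ∈ Finset.univ.filter (fun j : Fin n => (j : ℕ) < k), q j := by
  set c := T.card with hc
  let e := T.orderEmbOfFin hc.symm
  have himg : Finset.image e Finset.univ = T := by
    apply Finset.coe_injective
    rw [Finset.coe_image, Finset.coe_univ, Set.image_univ]
    exact Finset.range_orderEmbOfFin T hc.symm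
  have h1 : ∑ j ∈ T, q j = ∑ m : Fin c, q (e m) := by
    rw [← himg, Finset.sum_image (fun a _ b _ h => e.injective h)]
  rw [h1]
  have hle : ∀ m : Fin c, (m : ℕ) ≤ (e m : ℕ) :=
    fin_strictMono_le e e.strictMono
  have hmn : ∀ m : Fin c, (m : ℕ) < n := fun m => lt_of_le_of_lt (hle m) (e m).isLt
  have h2 : ∑ m : Fin c, q (e m) ≤ ∑ m : Fin c, q ⟨m, hmn m⟩ := by
    apply Finset.sum_le_sum
    intro m _
    exact hqm ⟨m, hmn m⟩ (e m) (by rw [Fin.le_def]; exact hle m)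
  refine h2.trans ?_
  let g : Fin c → Fin n := fun m => ⟨m, hmn m⟩
  have hg : Finset.image g Finset.univ ⊆ Finset.univ.filter (fun j : Fin n => (j : ℕ) < k) := by
    intro x hx
    simp only [Finset.mem_image] at hx
    obtain ⟨m, _, rfl⟩ := hx
    simp only [Finset.mem_filter, Finset.mem_univ, true_and, g]
    exact lt_of_lt_of_le m.isLt hT
  have h3 : ∑ m : Fin c, q ⟨m, hmn m⟩ = ∑ j ∈ Finset.image g Finset.univ, q j := by
    rw [Finset.sum_image]
    intro a _ b _ h
    exact Fin.ext (by simpa [g] using congrArg Fin.val h)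
  rw [h3]
  exact Finset.sum_le_sum_of_subset_of_nonneg hg (fun j _ _ => hq0 j)



/-- (Proposition: upper bound on the success probability.)
Let `σ₁` be a prefix code defined on a subset `s ⊆ {1,…,n₁}` with all codeword lengths
at most `L`, and let `σ₂` be any code such that the Construction-0 entry encoding is
injective on successfully encoded pairs.  Then the success probability is at most
`Σ_{i ∈ s} pᵢ · Σ_{j=1}^{min(n₂, 2^{L-ℓ(σ₁ i)})} qⱼ`.
(Elements of `Fin n` are 0-indexed, so the `j`-th element, `1 ≤ j`, is `j - 1 : Fin n₂`;
the condition `j ≤ min(n₂, 2^{L-ℓ})` becomes `(j : ℕ) < min n₂ (2^{L-ℓ})`.) -/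
theorem stmt5 (n₁ n₂ L : ℕ) (hL : 1 ≤ L)
    (p : Fin n₁ → ℝ) (q : Fin n₂ → ℝ)
    (hp : ∀ i, 0 < p i) (hq : ∀ j, 0 < q j)
    (hps : ∑ i, p i = 1) (hqs : ∑ j, q j = 1)
    (hpm : ∀ i j : Fin n₁, i ≤ j → p j ≤ p i)
    (hqm : ∀ i j : Fin n₂, i ≤ j → q j ≤ q i)
    (s : Finset (Fin n₁)) (σ₁ : Fin n₁ → List Bool) (σ₂ : Fin n₂ → List Bool)
    (hpre : ∀ i ∈ s, ∀ j ∈ s, i ≠ j → ¬ (σ₁ i <+: σ₁ j))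
    (hlen : ∀ i ∈ s, (σ₁ i).length ≤ L)
    (hinj : ∀ i ∈ s, ∀ i' ∈ s, ∀ j j' : Fin n₂,
      (σ₁ i).length + (σ₂ j).length ≤ L →
      (σ₁ i').length + (σ₂ j').length ≤ L →
      σ₁ i ++ σ₂ j ++ List.replicate (L - (σ₁ i).length - (σ₂ j).length) false =
        σ₁ i' ++ σ₂ j' ++ List.replicate (L - (σ₁ i').length - (σ₂ j').length) false →
      i = i' ∧ j = j') :
    ∑ i ∈ s, ∑ j ∈ Finset.univ.filter
        (fun j : Fin n₂ => (σ₁ i).length + (σ₂ j).length ≤ L), p i * q j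
      ≤ ∑ i ∈ s, p i * ∑ j ∈ Finset.univ.filter
        (fun j : Fin n₂ => (j : ℕ) < min n₂ (2 ^ (L - (σ₁ i).length))), q j := by
  apply Finset.sum_le_sum
  intro i hi
  rw [← Finset.mul_sum]
  apply mul_le_mul_of_nonneg_left _ (hp i).le
  set m := L - (σ₁ i).length with hm
  set T := Finset.univ.filter (fun j : Fin n₂ => (σ₁ i).length + (σ₂ j).length ≤ L) with hT
  have hTlen : ∀ j ∈ T, (σ₂ j).length ≤ m := by
    intro j hj
    simp only [hT, Finset.mem_filter] at hj
    omega
  -- injective map into Fin m → Bool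
  have hcard : T.card ≤ min n₂ (2 ^ m) := by
    refine le_min ?_ ?_
    · calc T.card ≤ (Finset.univ : Finset (Fin n₂)).card := Finset.card_le_card (Finset.subset_univ _)
        _ = n₂ := by simp
    · have : T.card ≤ Fintype.card (Fin m → Bool) := by
        apply Finset.card_le_card_of_injOn
          (fun j (t : Fin m) => ((σ₂ j) ++ List.replicate (m - (σ₂ j).length) false).getD t.val false)
          (fun _ _ => Finset.mem_univ _)
        · intro j hj j' hj' heq
          replace hj : j ∈ T := Finset.mem_coe.mp hj
          replace hj' : j' ∈ T := Finset.mem_coe.mp hj'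
          have hj1 : (σ₂ j).length ≤ m := hTlen j hj
          have hj2 : (σ₂ j').length ≤ m := hTlen j' hj'
          have hL1 : ((σ₂ j) ++ List.replicate (m - (σ₂ j).length) false).length = m := by
            simp [List.length_append]; omega
          have hL2 : ((σ₂ j') ++ List.replicate (m - (σ₂ j').length) false).length = m := by
            simp [List.length_append]; omega
          have hlists : (σ₂ j) ++ List.replicate (m - (σ₂ j).length) false
              = (σ₂ j') ++ List.replicate (m - (σ₂ j').length) false := by
            apply List.ext_getElem (by rw [hL1, hL2])
            intro t h1 h2
            have ht : t < m := by omega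
            have e1 := List.getD_eq_getElem ((σ₂ j) ++ List.replicate (m - (σ₂ j).length) false)
              false h1
            have e2 := List.getD_eq_getElem ((σ₂ j') ++ List.replicate (m - (σ₂ j').length) false)
              false h2
            rw [← e1, ← e2]
            exact congrFun heq ⟨t, ht⟩
          have hmem : (σ₁ i).length + (σ₂ j).length ≤ L := by
            simp only [hT, Finset.mem_filter] at hj; exact hj.2
          have hmem' : (σ₁ i).length + (σ₂ j').length ≤ L := by
            simp only [hT, Finset.mem_filter] at hj'; exact hj'.2
          have hrep : L - (σ₁ i).length - (σ₂ j).length = m - (σ₂ j).length := by omega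
          have hrep' : L - (σ₁ i).length - (σ₂ j').length = m - (σ₂ j').length := by omega
          have := hinj i hi i hi j j' hmem hmem' (by
            rw [List.append_assoc, List.append_assoc, hrep, hrep', hlists])
          exact this.2
      simpa using this
  have hle := sum_le_sum_first q (fun j => (hq j).le) hqm T hcard
  exact hle
end

section
/- Let p = (p₁,…,p_{n₁}) and q = (q₁,…,q_{n₂}) be probability vectors of positive reals, each summing to 1 and arranged in non-increasing order, let L ≥ 1, and take the second-field codeword lengths to be those of σ̂₂, namely m₁ = 0 and mⱼ = ⌊log₂(j−1)⌋ + 1 for 2 ≤ j ≤ n₂. Then for every 1 ≤ k ≤ n₁ and every integer N ≥ 0, F(k,N) = max( max over ℓ₀ ∈ {1,…,L} of ( F(k−1, N − 2^{L−ℓ₀}) + p_k · Σ_{i=1}^{min(n₂, 2^{L−ℓ₀})} qᵢ ), F(k−1, N) ), where F(k−1, N − 2^{L−ℓ₀}) = −∞ whenever N − 2^{L−ℓ₀} < 0. -/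
/-!
Splitting off the last symbol: an admissible length function on `{1,…,k+1}` is an admissible
one on `{1,…,k}` together with a length `v ∈ {1,…,L} ∪ {∞}` for symbol `k+1`, which uses up
weight `2^{L-v}` and contributes `p_{k+1} Σ_j q_j 𝟙[v + m_j ≤ L]`. So `F(k+1,N)` is the supremum
over `v` of `F(k, N - 2^{L-v})` plus that contribution; `v = ∞` gives the term `F(k,N)`. For
`σ̂₂`, `l₀ + m_j ≤ L` holds exactly for `j ≤ 2^{L-l₀}`, so the contribution of `l₀` is a
prefix sum of `q`.
-/

/-- The weight `2^{L-l}` (in units of `2^{-L}`) of an extended codeword length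
`l ∈ ℕ ∪ {∞}`, with the convention `2^{L-∞} = 0`. -/
def lenWeight (L : ℕ) (l : ℕ∞) : ℤ :=
  if l = ⊤ then 0 else 2 ^ (L - l.toNat)

/-- `F p q n₂ L m k N` : the maximum, over length functions
`ℓ : {1,…,k} → {1,…,L} ∪ {∞}` whose total weight `Σ_{i=1}^k 2^{L-ℓ(i)}` is at most `N`,
of the success probability `Σ_{i=1}^k Σ_{j=1}^{n₂} pᵢ qⱼ 𝟙[ℓ(i) + mⱼ ≤ L]`, where `m`
gives the second-field codeword lengths.  By the `sSup` over `EReal` conventions,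
`F(0,N) = 0` for `N ≥ 0` and `F(k,N) = -∞` (i.e. `⊥`) for `N < 0`. -/
noncomputable def F (p q : ℕ → ℝ) (n₂ L : ℕ) (m : ℕ → ℕ∞) (k : ℕ) (N : ℤ) : EReal :=
  sSup {x : EReal | ∃ ℓ : ℕ → ℕ∞,
    (∀ i ∈ Finset.Icc 1 k, 1 ≤ ℓ i ∧ (ℓ i ≤ (L : ℕ∞) ∨ ℓ i = ⊤)) ∧
    (∑ i ∈ Finset.Icc 1 k, lenWeight L (ℓ i)) ≤ N ∧
    x = ((∑ i ∈ Finset.Icc 1 k, ∑ j ∈ Finset.Icc 1 n₂,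
      if ℓ i + m j ≤ (L : ℕ∞) then p i * q j else 0 : ℝ) : EReal)}

/-- The codeword lengths of the code `σ̂₂` : `m₁ = 0`, and `mⱼ = ⌊log₂ (j-1)⌋ + 1`
for `j ≥ 2`. -/
def sigmaHatLen (j : ℕ) : ℕ∞ :=
  if j ≤ 1 then 0 else ((Nat.log 2 (j - 1) + 1 : ℕ) : ℕ∞)

open Finset

noncomputable def EReal.addCoeOrderIso (c : ℝ) : EReal ≃o EReal where
  toFun x := x + c
  invFun x := x + (-c : ℝ)
  left_inv x := by
    induction x using EReal.rec with
    | bot => rfl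
    | coe x => dsimp only; rw [← EReal.coe_add, ← EReal.coe_add, add_neg_cancel_right]
    | top => rfl
  right_inv x := by
    induction x using EReal.rec with
    | bot => rfl
    | coe x => dsimp only; rw [← EReal.coe_add, ← EReal.coe_add, neg_add_cancel_right]
    | top => rfl
  map_rel_iff' := (EReal.addLECancellable_coe c).add_le_add_iff_right

lemma EReal.sSup_image_add_coe (S : Set EReal) (c : ℝ) :
    sSup ((· + (c : EReal)) '' S) = sSup S + c := by
  rw [sSup_image]
  exact ((EReal.addCoeOrderIso c).map_sSup S).symm

lemma Finset.sum_Icc_succ_update {α M : Type*} [AddCommMonoid M] (g : ℕ → α → M)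
    (ℓ : ℕ → α) (k : ℕ) (v : α) :
    ∑ i ∈ Icc 1 (k + 1), g i (Function.update ℓ (k + 1) v i) =
      ∑ i ∈ Icc 1 k, g i (ℓ i) + g (k + 1) v := by
  rw [sum_Icc_succ_top (by omega), Function.update_self]
  congr 1
  refine sum_congr rfl fun i hi => ?_
  rw [Function.update_of_ne (by grind)]

lemma Finset.forall_Icc_succ_update {α : Type*} (P : α → Prop) (ℓ : ℕ → α) (k : ℕ) (v : α) :
    (∀ i ∈ Icc 1 (k + 1), P (Function.update ℓ (k + 1) v i)) ↔
      (∀ i ∈ Icc 1 k, P (ℓ i)) ∧ P v := by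
  rw [← insert_Icc_right_eq_Icc_add_one (by omega), forall_mem_insert, Function.update_self,
    and_comm]
  refine and_congr_left' (forall₂_congr fun i hi => ?_)
  rw [Function.update_of_ne (by grind)]

def admissibleLen (L : ℕ) : Set ℕ∞ := {l | 1 ≤ l ∧ (l ≤ (L : ℕ∞) ∨ l = ⊤)}

lemma admissibleLen_eq_insert_top (L : ℕ) :
    admissibleLen L = insert ⊤ ((↑) '' (Icc 1 L : Set ℕ)) := by
  ext l
  induction l using ENat.recTopCoe with
  | top => simp [admissibleLen]
  | coe l => simp [admissibleLen]

lemma iSup_admissibleLen {α : Type*} [CompleteLattice α] (L : ℕ) (g : ℕ∞ → α) :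
    ⨆ v ∈ admissibleLen L, g v = (⨆ l ∈ Icc 1 L, g l) ⊔ g ⊤ := by
  rw [admissibleLen_eq_insert_top, _root_.iSup_insert, iSup_image, sup_comm]
  simp only [coe_Icc, Set.mem_Icc, mem_Icc]

@[simp] lemma lenWeight_top (L : ℕ) : lenWeight L ⊤ = 0 := rfl

@[simp] lemma lenWeight_coe (L l : ℕ) : lenWeight L l = 2 ^ (L - l) := by
  simp [lenWeight]

section Recursion

variable (p q : ℕ → ℝ) (n₂ L : ℕ) (m : ℕ → ℕ∞)

def rowMass (i : ℕ) (l : ℕ∞) : ℝ :=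
  ∑ j ∈ Icc 1 n₂, if l + m j ≤ (L : ℕ∞) then p i * q j else 0

@[simp] lemma rowMass_top (i : ℕ) : rowMass p q n₂ L m i ⊤ = 0 := by
  simp [rowMass]

def Fset (k : ℕ) (N : ℤ) : Set EReal :=
  {x | ∃ ℓ : ℕ → ℕ∞, (∀ i ∈ Icc 1 k, ℓ i ∈ admissibleLen L) ∧
    ∑ i ∈ Icc 1 k, lenWeight L (ℓ i) ≤ N ∧
    x = ((∑ i ∈ Icc 1 k, rowMass p q n₂ L m i (ℓ i) : ℝ) : EReal)}

lemma F_eq_sSup_Fset (k : ℕ) (N : ℤ) : F p q n₂ L m k N = sSup (Fset p q n₂ L m k N) := rfl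

lemma Fset_succ (k : ℕ) (N : ℤ) :
    Fset p q n₂ L m (k + 1) N = ⋃ v ∈ admissibleLen L,
      (· + (rowMass p q n₂ L m (k + 1) v : EReal)) '' Fset p q n₂ L m k (N - lenWeight L v) := by
  ext x
  simp only [Fset, Set.mem_iUnion, Set.mem_image, Set.mem_ofPred_eq]
  constructor
  · rintro ⟨ℓ, hadm, hw, rfl⟩
    rw [sum_Icc_succ_top (by omega)] at hw ⊢
    refine ⟨ℓ (k + 1), hadm _ (by simp), _,
      ⟨ℓ, fun i hi => hadm i (by grind), by linarith, rfl⟩, by push_cast; rfl⟩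
  · rintro ⟨v, hv, _, ⟨ℓ, hadm, hw, rfl⟩, rfl⟩
    refine ⟨Function.update ℓ (k + 1) v,
      (forall_Icc_succ_update (· ∈ admissibleLen L) ℓ k v).2 ⟨hadm, hv⟩, ?_, ?_⟩
    · rw [sum_Icc_succ_update (fun _ => lenWeight L)]
      linarith
    · rw [sum_Icc_succ_update (rowMass p q n₂ L m)]
      push_cast; rfl

lemma F_succ (k : ℕ) (N : ℤ) :
    F p q n₂ L m (k + 1) N =
      ⨆ v ∈ admissibleLen L, F p q n₂ L m k (N - lenWeight L v) + rowMass p q n₂ L m (k + 1) v := by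
  simp only [F_eq_sSup_Fset, Fset_succ, sSup_iUnion, EReal.sSup_image_add_coe]

end Recursion

lemma coe_add_sigmaHatLen_le_iff {L l₀ j : ℕ} (hl₀ : l₀ ≤ L) (hj : 1 ≤ j) :
    (l₀ : ℕ∞) + sigmaHatLen j ≤ L ↔ j ≤ 2 ^ (L - l₀) := by
  unfold sigmaHatLen
  split_ifs with h
  · simp only [add_zero, Nat.cast_le, hl₀, true_iff]
    have := Nat.one_le_two_pow (n := L - l₀)
    omega
  · norm_cast
    have := Nat.log_lt_iff_lt_pow (b := 2) one_lt_two (x := L - l₀) (y := j - 1) (by omega)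
    omega

lemma rowMass_sigmaHatLen (p q : ℕ → ℝ) (n₂ : ℕ) {L l₀ : ℕ} (hl₀ : l₀ ≤ L) (i : ℕ) :
    rowMass p q n₂ L sigmaHatLen i l₀ = p i * ∑ j ∈ Icc 1 (min n₂ (2 ^ (L - l₀))), q j := by
  have hfilter : Icc 1 (min n₂ (2 ^ (L - l₀))) =
      (Icc 1 n₂).filter (fun j => (l₀ : ℕ∞) + sigmaHatLen j ≤ L) := by
    ext j
    simp only [mem_filter, mem_Icc, le_min_iff]
    constructor
    · rintro ⟨hj, hjn, hjl⟩
      exact ⟨⟨hj, hjn⟩, (coe_add_sigmaHatLen_le_iff hl₀ hj).2 hjl⟩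
    · rintro ⟨⟨hj, hjn⟩, hjl⟩
      exact ⟨hj, hjn, (coe_add_sigmaHatLen_le_iff hl₀ hj).1 hjl⟩
  rw [rowMass, hfilter, mul_sum, sum_filter]

theorem stmt9_general (n₂ L : ℕ) (p q : ℕ → ℝ)
    (k : ℕ) (hk1 : 1 ≤ k) (N : ℤ) :
    F p q n₂ L sigmaHatLen k N =
      max
        (⨆ l₀ ∈ Finset.Icc 1 L,
          (F p q n₂ L sigmaHatLen (k - 1) (N - 2 ^ (L - l₀)) +
            ((p k * ∑ i ∈ Finset.Icc 1 (min n₂ (2 ^ (L - l₀))), q i : ℝ) : EReal)))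
        (F p q n₂ L sigmaHatLen (k - 1) N) := by
  obtain ⟨k, rfl⟩ : ∃ k', k = k' + 1 := ⟨k - 1, by omega⟩
  rw [F_succ, iSup_admissibleLen, Nat.add_sub_cancel]
  congr 1
  · refine iSup_congr fun l₀ => iSup_congr fun hl₀ => ?_
    rw [lenWeight_coe, rowMass_sigmaHatLen p q n₂ (mem_Icc.1 hl₀).2]
  · simp

/-- (Lemma 2: the simplified recursion for `F` when the second-field
lengths are those of `σ̂₂`.)  For every `1 ≤ k ≤ n₁` and every integer `N ≥ 0`,
`F(k,N) = max( max_{ℓ₀ ∈ [1,L]} ( F(k-1, N - 2^{L-ℓ₀}) + p_k · Σ_{i=1}^{min(n₂,2^{L-ℓ₀})} qᵢ ),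
F(k-1,N) )`, where terms with `N - 2^{L-ℓ₀} < 0` have `F = -∞ = ⊥`. -/
theorem stmt9 (n₁ n₂ L : ℕ) (hL : 1 ≤ L) (p q : ℕ → ℝ)
    (hp : ∀ i ∈ Finset.Icc 1 n₁, 0 < p i) (hq : ∀ j ∈ Finset.Icc 1 n₂, 0 < q j)
    (hps : ∑ i ∈ Finset.Icc 1 n₁, p i = 1) (hqs : ∑ j ∈ Finset.Icc 1 n₂, q j = 1)
    (hpm : ∀ i j : ℕ, 1 ≤ i → i ≤ j → j ≤ n₁ → p j ≤ p i)
    (hqm : ∀ i j : ℕ, 1 ≤ i → i ≤ j → j ≤ n₂ → q j ≤ q i)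
    (k : ℕ) (hk1 : 1 ≤ k) (hk2 : k ≤ n₁) (N : ℤ) (hN : 0 ≤ N) :
    F p q n₂ L sigmaHatLen k N =
      max
        (⨆ l₀ ∈ Finset.Icc 1 L,
          (F p q n₂ L sigmaHatLen (k - 1) (N - 2 ^ (L - l₀)) +
            ((p k * ∑ i ∈ Finset.Icc 1 (min n₂ (2 ^ (L - l₀))), q i : ℝ) : EReal)))
        (F p q n₂ L sigmaHatLen (k - 1) N) :=
  stmt9_general n₂ L p q k hk1 N
end

section
/- Fix an even width L and a probability vector p = (p₁,…,p_n) of positive reals summing to 1 in non-increasing order. Let d be an integer with 1 ≤ d ≤ L/2 − 1, let A = {L/2 − d + 1, …, L/2 + d − 1} and l' = L/2 + d. Then for all indices 1 ≤ k₁ ≤ k₂ ≤ n and every integer N, G(A ∪ {l'}, [k₁,k₂], N) = max over j ∈ {0, 1, …, k₂ − k₁ + 1} of G(A, [k₁, k₂ − j], N − j·2^{L−l'}), where G over an empty index range equals 0 when its budget is ≥ 0 and −∞ when its budget is negative. -/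
/-- `G p L A k₁ k₂ N` : the maximum, over length assignments `ℓ : {k₁,…,k₂} → A`
satisfying `Σ_{i=k₁}^{k₂} 2^{L-ℓ(i)} ≤ N`, of
`Σ_{i=k₁}^{k₂} Σ_{i'=k₁}^{k₂} pᵢ p_{i'} 𝟙[ℓ(i) + ℓ(i') ≤ L]`.  By the `sSup` over
`EReal` conventions, `G(A,[k₁,k₁-1],N) = 0` for `N ≥ 0`, and `G = -∞` (i.e. `⊥`)
whenever `N < 0` or no assignment satisfies the constraint. -/
noncomputable def G (p : ℕ → ℝ) (L : ℕ) (A : Finset ℕ) (k₁ k₂ : ℕ) (N : ℤ) : EReal :=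
  sSup {x : EReal | ∃ ℓ : ℕ → ℕ,
    (∀ i ∈ Finset.Icc k₁ k₂, ℓ i ∈ A) ∧
    ((∑ i ∈ Finset.Icc k₁ k₂, (2 : ℤ) ^ (L - ℓ i)) ≤ N) ∧
    x = ((∑ i ∈ Finset.Icc k₁ k₂, ∑ i' ∈ Finset.Icc k₁ k₂,
      if ℓ i + ℓ i' ≤ L then p i * p i' else 0 : ℝ) : EReal)}

/-- A strictly monotone `ℕ`-valued function on `Fin m` bounded below by `k`
satisfies `k + v ≤ f v`. -/
lemma strictMono_fin_lb {m : ℕ} (f : Fin m → ℕ) (hf : StrictMono f) (k : ℕ)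
    (hk : ∀ t, k ≤ f t) : ∀ v (hv : v < m), k + v ≤ f ⟨v, hv⟩ := by
  intro v
  induction v with
  | zero => intro hv; simpa using hk ⟨0, hv⟩
  | succ v ih =>
    intro hv
    have h1 : k + v ≤ f ⟨v, by omega⟩ := ih (by omega)
    have h2 : f ⟨v, by omega⟩ < f ⟨v + 1, hv⟩ := hf (by simp [Fin.lt_def])
    omega

/-- Reindexing a sum along a bijection between two finsets of naturals. -/
lemma sum_reindex {M : Type*} [AddCommMonoid M] (s t : Finset ℕ) (σ : ℕ → ℕ)
    (h1 : ∀ i ∈ s, σ i ∈ t)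
    (h2 : ∀ a₁ ∈ s, ∀ a₂ ∈ s, σ a₁ = σ a₂ → a₁ = a₂)
    (h3 : ∀ b ∈ t, ∃ a ∈ s, σ a = b) (f : ℕ → M) :
    ∑ i ∈ s, f (σ i) = ∑ b ∈ t, f b :=
  Finset.sum_bij (fun i _ => σ i) h1 (fun a₁ ha₁ a₂ ha₂ h => h2 a₁ ha₁ a₂ ha₂ h)
    (fun b hb => by obtain ⟨a, ha, hab⟩ := h3 b hb; exact ⟨a, ha, hab⟩)
    (fun a ha => rfl)

/-- (Theorem: going right in the length sequence, to `l' = L/2 + d`.)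
For an even width `L`, `1 ≤ d ≤ L/2 - 1`, `A = {L/2-d+1, …, L/2+d-1}` and
`l' = L/2 + d`, for all `1 ≤ k₁ ≤ k₂ ≤ n` and every integer `N`:
`G(A ∪ {l'}, [k₁,k₂], N) = max_{j ∈ {0,…,k₂-k₁+1}} G(A, [k₁,k₂-j], N - j·2^{L-l'})`. -/
theorem stmt10 (n L : ℕ) (hL : Even L) (p : ℕ → ℝ)
    (hp : ∀ i ∈ Finset.Icc 1 n, 0 < p i)
    (hps : ∑ i ∈ Finset.Icc 1 n, p i = 1)
    (hpm : ∀ i j : ℕ, 1 ≤ i → i ≤ j → j ≤ n → p j ≤ p i)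
    (d : ℕ) (hd1 : 1 ≤ d) (hd2 : d ≤ L / 2 - 1)
    (k₁ k₂ : ℕ) (hk1 : 1 ≤ k₁) (hk12 : k₁ ≤ k₂) (hk2 : k₂ ≤ n) (N : ℤ) :
    G p L (Finset.Icc (L / 2 - d + 1) (L / 2 + d - 1) ∪ {L / 2 + d}) k₁ k₂ N
      = ⨆ j ∈ Finset.Icc 0 (k₂ - k₁ + 1),
          G p L (Finset.Icc (L / 2 - d + 1) (L / 2 + d - 1)) k₁ (k₂ - j)
            (N - (j : ℤ) * 2 ^ (L - (L / 2 + d))) := by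
  classical
  have hL2 : L % 2 = 0 := Nat.even_iff.mp hL
  -- key arithmetic fact: anything paired with `l' = L/2+d` exceeds `L`
  have hkey : ∀ a b : ℕ, a = L / 2 + d → L / 2 - d + 1 ≤ b → ¬(a + b ≤ L) := by
    intro a b h1 h2; omega
  apply le_antisymm
  · -- LHS ≤ RHS
    refine sSup_le ?_
    rintro x ⟨ℓ, hmem, hbud, rfl⟩
    -- the set of indices assigned l', and its complement
    set J : Finset ℕ := (Finset.Icc k₁ k₂).filter (fun i => ℓ i = L / 2 + d) with hJdef
    set Sc : Finset ℕ := (Finset.Icc k₁ k₂).filter (fun i => ¬ ℓ i = L / 2 + d) with hScdef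
    have hcard : J.card + Sc.card = k₂ + 1 - k₁ := by
      rw [hJdef, hScdef, Finset.card_filter_add_card_filter_not, Nat.card_Icc]
    set j : ℕ := J.card with hjdef
    set m : ℕ := Sc.card with hmdef
    have hmcard : Sc.card = m := rfl
    have hIcc_card : (Finset.Icc k₁ (k₂ - j)).card = m := by
      rw [Nat.card_Icc]; omega
    set e := Sc.orderEmbOfFin hmcard with hedef
    have he_mem : ∀ t, (e t : ℕ) ∈ Sc := fun t => Sc.orderEmbOfFin_mem hmcard t
    have he_k₁ : ∀ t, k₁ ≤ e t := by
      intro t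
      have := he_mem t
      rw [hScdef, Finset.mem_filter, Finset.mem_Icc] at this
      exact this.1.1
    have he_lb := strictMono_fin_lb (fun t => (e t : ℕ)) e.strictMono k₁ he_k₁
    set σ : ℕ → ℕ := fun i => if h : i - k₁ < m then (e ⟨i - k₁, h⟩ : ℕ) else i with hσdef
    have hlt : ∀ i ∈ Finset.Icc k₁ (k₂ - j), i - k₁ < m := by
      intro i hi
      rw [Finset.mem_Icc] at hi
      omega
    have hσmem : ∀ i ∈ Finset.Icc k₁ (k₂ - j), σ i ∈ Sc := by
      intro i hi
      rw [hσdef]; simp only [dif_pos (hlt i hi)]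
      exact he_mem _
    have hσge : ∀ i ∈ Finset.Icc k₁ (k₂ - j), i ≤ σ i := by
      intro i hi
      have h1 := hlt i hi
      have h2 : k₁ + (i - k₁) ≤ (e ⟨i - k₁, h1⟩ : ℕ) := he_lb (i - k₁) h1
      have h3 := (Finset.mem_Icc.1 hi).1
      rw [hσdef]; simp only [dif_pos h1]
      omega
    have hσinj : ∀ a₁ ∈ Finset.Icc k₁ (k₂ - j), ∀ a₂ ∈ Finset.Icc k₁ (k₂ - j),
        σ a₁ = σ a₂ → a₁ = a₂ := by
      intro a₁ h₁ a₂ h₂ h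
      rw [hσdef] at h
      simp only [dif_pos (hlt a₁ h₁), dif_pos (hlt a₂ h₂)] at h
      have h' : (⟨a₁ - k₁, hlt a₁ h₁⟩ : Fin m) = ⟨a₂ - k₁, hlt a₂ h₂⟩ := e.injective h
      have h'' : a₁ - k₁ = a₂ - k₁ := congrArg Fin.val h'
      have g₁ := (Finset.mem_Icc.1 h₁).1
      have g₂ := (Finset.mem_Icc.1 h₂).1
      omega
    have hσsurj : ∀ b ∈ Sc, ∃ a ∈ Finset.Icc k₁ (k₂ - j), σ a = b := by
      intro b hb
      have : b ∈ Set.range (fun t => (e t : ℕ)) := by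
        rw [hedef, Finset.range_orderEmbOfFin]
        exact hb
      obtain ⟨t, ht⟩ := this
      refine ⟨k₁ + t, ?_, ?_⟩
      · rw [Finset.mem_Icc]
        have := t.2
        omega
      · have h1 : k₁ + (t : ℕ) - k₁ = (t : ℕ) := by omega
        rw [hσdef]
        have h2 : k₁ + (t : ℕ) - k₁ < m := by rw [h1]; exact t.2
        simp only [dif_pos h2]
        rw [← ht]
        congr 1
        exact Fin.ext h1
    have hSc_prop : ∀ b ∈ Sc, b ∈ Finset.Icc k₁ k₂ ∧ ¬ ℓ b = L / 2 + d := by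
      intro b hb
      rw [hScdef, Finset.mem_filter] at hb
      exact hb
    have hlow : ∀ i ∈ Finset.Icc k₁ k₂, L / 2 - d + 1 ≤ ℓ i := by
      intro i hi
      rcases Finset.mem_union.1 (hmem i hi) with h | h
      · exact (Finset.mem_Icc.1 h).1
      · have := Finset.mem_singleton.1 h; omega
    -- budget
    have hJsum : ∑ i ∈ J, (2 : ℤ) ^ (L - ℓ i) = (j : ℤ) * 2 ^ (L - (L / 2 + d)) := by
      calc ∑ i ∈ J, (2 : ℤ) ^ (L - ℓ i)
          = ∑ _i ∈ J, (2 : ℤ) ^ (L - (L / 2 + d)) := by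
            refine Finset.sum_congr rfl fun i hi => ?_
            rw [hJdef, Finset.mem_filter] at hi
            rw [hi.2]
        _ = J.card • (2 : ℤ) ^ (L - (L / 2 + d)) := Finset.sum_const _
        _ = (j : ℤ) * 2 ^ (L - (L / 2 + d)) := by rw [← hjdef, nsmul_eq_mul]
    have hsplit := Finset.sum_filter_add_sum_filter_not (Finset.Icc k₁ k₂)
      (fun i => ℓ i = L / 2 + d) (fun i => (2 : ℤ) ^ (L - ℓ i))
    rw [← hJdef, ← hScdef] at hsplit
    have hScsum : ∑ i ∈ Sc, (2 : ℤ) ^ (L - ℓ i) ≤ N - (j : ℤ) * 2 ^ (L - (L / 2 + d)) := by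
      have := hbud
      rw [← hsplit, hJsum] at this
      linarith
    set ℓ' : ℕ → ℕ := fun i => ℓ (σ i) with hℓ'def
    have hmem' : ∀ i ∈ Finset.Icc k₁ (k₂ - j),
        ℓ' i ∈ Finset.Icc (L / 2 - d + 1) (L / 2 + d - 1) := by
      intro i hi
      have h1 := hSc_prop _ (hσmem i hi)
      rcases Finset.mem_union.1 (hmem _ h1.1) with h | h
      · exact h
      · exact absurd (Finset.mem_singleton.1 h) h1.2
    have hbud' : ∑ i ∈ Finset.Icc k₁ (k₂ - j), (2 : ℤ) ^ (L - ℓ' i)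
        ≤ N - (j : ℤ) * 2 ^ (L - (L / 2 + d)) := by
      rw [show (∑ i ∈ Finset.Icc k₁ (k₂ - j), (2 : ℤ) ^ (L - ℓ' i))
          = ∑ b ∈ Sc, (2 : ℤ) ^ (L - ℓ b) from
        sum_reindex _ _ σ hσmem hσinj hσsurj (fun b => (2 : ℤ) ^ (L - ℓ b))]
      exact hScsum
    -- objective
    have hrow0 : ∀ i ∈ J,
        (∑ i' ∈ Finset.Icc k₁ k₂, if ℓ i + ℓ i' ≤ L then p i * p i' else 0) = 0 := by
      intro i hi
      refine Finset.sum_eq_zero fun i' hi' => ?_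
      rw [hJdef, Finset.mem_filter] at hi
      rw [if_neg (hkey _ _ hi.2 (hlow i' hi'))]
    have hcol0 : ∀ i ∈ Sc, ∀ i' ∈ J, (if ℓ i + ℓ i' ≤ L then p i * p i' else 0) = 0 := by
      intro i hi i' hi'
      rw [hJdef, Finset.mem_filter] at hi'
      refine if_neg fun hc => ?_
      exact hkey _ _ hi'.2 (hlow i (hSc_prop i hi).1) (by omega)
    have hO := Finset.sum_filter_add_sum_filter_not (Finset.Icc k₁ k₂)
      (fun i => ℓ i = L / 2 + d)
      (fun i => ∑ i' ∈ Finset.Icc k₁ k₂, if ℓ i + ℓ i' ≤ L then p i * p i' else 0)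
    rw [← hJdef, ← hScdef] at hO
    have hx1 : (∑ i ∈ Finset.Icc k₁ k₂, ∑ i' ∈ Finset.Icc k₁ k₂,
          if ℓ i + ℓ i' ≤ L then p i * p i' else 0)
        = ∑ i ∈ Sc, ∑ i' ∈ Sc, (if ℓ i + ℓ i' ≤ L then p i * p i' else 0) := by
      rw [← hO, Finset.sum_eq_zero hrow0, zero_add]
      refine Finset.sum_congr rfl fun i hi => ?_
      have hO' := Finset.sum_filter_add_sum_filter_not (Finset.Icc k₁ k₂)
        (fun i' => ℓ i' = L / 2 + d)
        (fun i' => if ℓ i + ℓ i' ≤ L then p i * p i' else 0)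
      rw [← hJdef, ← hScdef] at hO'
      rw [← hO', Finset.sum_eq_zero (fun i' hi' => hcol0 i hi i' hi'), zero_add]
    have hx2 : (∑ i ∈ Sc, ∑ i' ∈ Sc, if ℓ i + ℓ i' ≤ L then p i * p i' else 0)
        = ∑ i ∈ Finset.Icc k₁ (k₂ - j), ∑ i' ∈ Finset.Icc k₁ (k₂ - j),
            (if ℓ (σ i) + ℓ (σ i') ≤ L then p (σ i) * p (σ i') else 0) := by
      rw [← sum_reindex (Finset.Icc k₁ (k₂ - j)) Sc σ hσmem hσinj hσsurj
        (fun b => ∑ i' ∈ Sc, if ℓ b + ℓ i' ≤ L then p b * p i' else 0)]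
      refine Finset.sum_congr rfl fun i hi => ?_
      exact (sum_reindex _ _ σ hσmem hσinj hσsurj
        (fun b => if ℓ (σ i) + ℓ b ≤ L then p (σ i) * p b else 0)).symm
    have hbound : ∀ a ∈ Finset.Icc k₁ (k₂ - j), 1 ≤ a ∧ a ≤ σ a ∧ σ a ≤ n := by
      intro a ha
      have h1 := (Finset.mem_Icc.1 (hSc_prop _ (hσmem a ha)).1).2
      have h2 := (Finset.mem_Icc.1 ha).1
      exact ⟨by omega, hσge a ha, by omega⟩
    have hx3 : (∑ i ∈ Finset.Icc k₁ (k₂ - j), ∑ i' ∈ Finset.Icc k₁ (k₂ - j),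
          if ℓ (σ i) + ℓ (σ i') ≤ L then p (σ i) * p (σ i') else 0)
        ≤ ∑ i ∈ Finset.Icc k₁ (k₂ - j), ∑ i' ∈ Finset.Icc k₁ (k₂ - j),
            (if ℓ' i + ℓ' i' ≤ L then p i * p i' else 0) := by
      refine Finset.sum_le_sum fun i hi => Finset.sum_le_sum fun i' hi' => ?_
      obtain ⟨hi1, hi2, hi3⟩ := hbound i hi
      obtain ⟨hi'1, hi'2, hi'3⟩ := hbound i' hi'
      by_cases hc : ℓ (σ i) + ℓ (σ i') ≤ L
      · rw [if_pos hc, if_pos (show ℓ' i + ℓ' i' ≤ L from hc)]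
        have hpσi : 0 < p (σ i') := hp _ (Finset.mem_Icc.2 ⟨by omega, hi'3⟩)
        have hpi : 0 < p i := hp _ (Finset.mem_Icc.2 ⟨hi1, by omega⟩)
        exact mul_le_mul (hpm i (σ i) hi1 hi2 hi3) (hpm i' (σ i') hi'1 hi'2 hi'3)
          hpσi.le hpi.le
      · rw [if_neg hc, if_neg (show ¬ ℓ' i + ℓ' i' ≤ L from hc)]
    have hjmem : j ∈ Finset.Icc 0 (k₂ - k₁ + 1) := by
      rw [Finset.mem_Icc]; omega
    calc ((∑ i ∈ Finset.Icc k₁ k₂, ∑ i' ∈ Finset.Icc k₁ k₂,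
            if ℓ i + ℓ i' ≤ L then p i * p i' else 0 : ℝ) : EReal)
        ≤ ((∑ i ∈ Finset.Icc k₁ (k₂ - j), ∑ i' ∈ Finset.Icc k₁ (k₂ - j),
            if ℓ' i + ℓ' i' ≤ L then p i * p i' else 0 : ℝ) : EReal) := by
          exact EReal.coe_le_coe_iff.2 (by rw [hx1, hx2]; exact hx3)
      _ ≤ G p L (Finset.Icc (L / 2 - d + 1) (L / 2 + d - 1)) k₁ (k₂ - j)
            (N - (j : ℤ) * 2 ^ (L - (L / 2 + d))) := le_sSup ⟨ℓ', hmem', hbud', rfl⟩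
      _ ≤ ⨆ j ∈ Finset.Icc 0 (k₂ - k₁ + 1),
            G p L (Finset.Icc (L / 2 - d + 1) (L / 2 + d - 1)) k₁ (k₂ - j)
              (N - (j : ℤ) * 2 ^ (L - (L / 2 + d))) :=
          le_iSup₂ (f := fun j (_ : j ∈ Finset.Icc 0 (k₂ - k₁ + 1)) =>
            G p L (Finset.Icc (L / 2 - d + 1) (L / 2 + d - 1)) k₁ (k₂ - j)
              (N - (j : ℤ) * 2 ^ (L - (L / 2 + d)))) j hjmem
  · -- RHS ≤ LHS
    refine iSup₂_le fun j hj => ?_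
    rw [Finset.mem_Icc] at hj
    refine sSup_le ?_
    rintro x ⟨ℓ, hmem, hbud, rfl⟩
    set ℓ'' : ℕ → ℕ := fun i => if i ≤ k₂ - j then ℓ i else L / 2 + d with hℓ''
    have hjk : j ≤ k₂ := by omega
    have hmem'' : ∀ i ∈ Finset.Icc k₁ k₂,
        ℓ'' i ∈ Finset.Icc (L / 2 - d + 1) (L / 2 + d - 1) ∪ {L / 2 + d} := by
      intro i hi
      rw [Finset.mem_Icc] at hi
      by_cases hc : i ≤ k₂ - j
      · have h := hmem i (Finset.mem_Icc.2 ⟨hi.1, hc⟩)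
        rw [hℓ'']; simp only [if_pos hc]
        exact Finset.mem_union_left _ h
      · rw [hℓ'']; simp only [if_neg hc]
        exact Finset.mem_union_right _ (Finset.mem_singleton_self _)
    have hf1 : (Finset.Icc k₁ k₂).filter (fun i => i ≤ k₂ - j) = Finset.Icc k₁ (k₂ - j) := by
      ext i; simp only [Finset.mem_filter, Finset.mem_Icc]; omega
    have hf2 : (Finset.Icc k₁ k₂).filter (fun i => ¬ i ≤ k₂ - j)
        = Finset.Icc (k₂ - j + 1) k₂ := by
      ext i; simp only [Finset.mem_filter, Finset.mem_Icc, not_le]; omega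
    have hval'' : ∀ i ∈ Finset.Icc k₁ (k₂ - j), ℓ'' i = ℓ i := by
      intro i hi
      rw [hℓ'']; simp only [if_pos (Finset.mem_Icc.1 hi).2]
    have hval2'' : ∀ i ∈ Finset.Icc (k₂ - j + 1) k₂, ℓ'' i = L / 2 + d := by
      intro i hi
      have := (Finset.mem_Icc.1 hi).1
      rw [hℓ'']; simp only [if_neg (show ¬ i ≤ k₂ - j by omega)]
    have hlow'' : ∀ i ∈ Finset.Icc k₁ k₂, L / 2 - d + 1 ≤ ℓ'' i := by
      intro i hi
      rw [Finset.mem_Icc] at hi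
      by_cases hc : i ≤ k₂ - j
      · have h := hmem i (Finset.mem_Icc.2 ⟨hi.1, hc⟩)
        rw [Finset.mem_Icc] at h
        rw [hℓ'']; simp only [if_pos hc]
        exact h.1
      · rw [hℓ'']; simp only [if_neg hc]; omega
    -- budget
    have hb2 : ∑ i ∈ Finset.Icc (k₂ - j + 1) k₂, (2 : ℤ) ^ (L - ℓ'' i)
        = (j : ℤ) * 2 ^ (L - (L / 2 + d)) := by
      calc ∑ i ∈ Finset.Icc (k₂ - j + 1) k₂, (2 : ℤ) ^ (L - ℓ'' i)
          = ∑ _i ∈ Finset.Icc (k₂ - j + 1) k₂, (2 : ℤ) ^ (L - (L / 2 + d)) := by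
            refine Finset.sum_congr rfl fun i hi => ?_
            rw [hval2'' i hi]
        _ = (Finset.Icc (k₂ - j + 1) k₂).card • (2 : ℤ) ^ (L - (L / 2 + d)) :=
            Finset.sum_const _
        _ = (j : ℤ) * 2 ^ (L - (L / 2 + d)) := by
            rw [Nat.card_Icc, show k₂ + 1 - (k₂ - j + 1) = j by omega, nsmul_eq_mul]
    have hbudtot : ∑ i ∈ Finset.Icc k₁ k₂, (2 : ℤ) ^ (L - ℓ'' i) ≤ N := by
      have hsp := Finset.sum_filter_add_sum_filter_not (Finset.Icc k₁ k₂)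
        (fun i => i ≤ k₂ - j) (fun i => (2 : ℤ) ^ (L - ℓ'' i))
      rw [hf1, hf2] at hsp
      rw [← hsp, hb2]
      have h1 : ∑ i ∈ Finset.Icc k₁ (k₂ - j), (2 : ℤ) ^ (L - ℓ'' i)
          = ∑ i ∈ Finset.Icc k₁ (k₂ - j), (2 : ℤ) ^ (L - ℓ i) :=
        Finset.sum_congr rfl fun i hi => by rw [hval'' i hi]
      rw [h1]; linarith
    -- objective
    have hobj : (∑ i ∈ Finset.Icc k₁ k₂, ∑ i' ∈ Finset.Icc k₁ k₂,
          if ℓ'' i + ℓ'' i' ≤ L then p i * p i' else 0)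
        = ∑ i ∈ Finset.Icc k₁ (k₂ - j), ∑ i' ∈ Finset.Icc k₁ (k₂ - j),
            (if ℓ i + ℓ i' ≤ L then p i * p i' else 0) := by
      have hsp := Finset.sum_filter_add_sum_filter_not (Finset.Icc k₁ k₂)
        (fun i => i ≤ k₂ - j)
        (fun i => ∑ i' ∈ Finset.Icc k₁ k₂, if ℓ'' i + ℓ'' i' ≤ L then p i * p i' else 0)
      rw [hf1, hf2] at hsp
      rw [← hsp]
      have hz : ∑ i ∈ Finset.Icc (k₂ - j + 1) k₂,
          (∑ i' ∈ Finset.Icc k₁ k₂, if ℓ'' i + ℓ'' i' ≤ L then p i * p i' else 0) = 0 := by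
        refine Finset.sum_eq_zero fun i hi => Finset.sum_eq_zero fun i' hi' => ?_
        exact if_neg (hkey _ _ (hval2'' i hi) (hlow'' i' hi'))
      rw [hz, add_zero]
      refine Finset.sum_congr rfl fun i hi => ?_
      have hiIcc : i ∈ Finset.Icc k₁ k₂ := by
        rw [Finset.mem_Icc] at hi ⊢; omega
      have hsp' := Finset.sum_filter_add_sum_filter_not (Finset.Icc k₁ k₂)
        (fun i' => i' ≤ k₂ - j)
        (fun i' => if ℓ'' i + ℓ'' i' ≤ L then p i * p i' else 0)
      rw [hf1, hf2] at hsp'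
      rw [← hsp']
      have hz' : ∑ i' ∈ Finset.Icc (k₂ - j + 1) k₂,
          (if ℓ'' i + ℓ'' i' ≤ L then p i * p i' else 0) = 0 := by
        refine Finset.sum_eq_zero fun i' hi' => ?_
        refine if_neg fun hc => ?_
        exact hkey _ _ (hval2'' i' hi') (hlow'' i hiIcc) (by omega)
      rw [hz', add_zero]
      refine Finset.sum_congr rfl fun i' hi' => ?_
      rw [hval'' i hi, hval'' i' hi']
    exact le_sSup ⟨ℓ'', hmem'', hbudtot, congrArg Real.toEReal hobj.symm⟩
end

section
/- Fix an even width L and a probability vector p = (p₁,…,p_n) of positive reals summing to 1 in non-increasing order. Let d be an integer with 1 ≤ d ≤ L/2 − 1, let A = {L/2 − d + 1, …, L/2 + d} and l' = L/2 − d. Then for all indices 1 ≤ k₁ ≤ k₂ ≤ n and every integer N, G(A ∪ {l'}, [k₁,k₂], N) = max over j ∈ {0, 1, …, k₂ − k₁ + 1} of [ G(A, [k₁ + j, k₂], N − j·2^{L−l'}) + (Σ_{i=k₁}^{k₁+j−1} pᵢ)(Σ_{i=k₁}^{k₂} pᵢ) + (Σ_{i=k₁+j}^{k₂} pᵢ)(Σ_{i=k₁}^{k₁+j−1}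 pᵢ) ], where G over an empty index range equals 0 when its budget is ≥ 0 and −∞ when its budget is negative. -/
open Finset

def pairMass (p : ℕ → ℝ) (L : ℕ) (ℓ : ℕ → ℕ) (s : Finset ℕ) : ℝ :=
  ∑ i ∈ s, ∑ i' ∈ s, if ℓ i + ℓ i' ≤ L then p i * p i' else 0

def unpairedMass (p : ℕ → ℝ) (L : ℕ) (ℓ : ℕ → ℕ) (s : Finset ℕ) : ℝ :=
  ∑ i ∈ s, ∑ i' ∈ s, if ℓ i + ℓ i' ≤ L then 0 else p i * p i'

def kraftSum (L : ℕ) (ℓ : ℕ → ℕ) (s : Finset ℕ) : ℤ :=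
  ∑ i ∈ s, 2 ^ (L - ℓ i)

section Assignments

variable {p : ℕ → ℝ} {L : ℕ} {ℓ ℓ' ρ : ℕ → ℕ} {s t S T : Finset ℕ}

lemma coe_pairMass_le_G {A : Finset ℕ} {k₁ k₂ : ℕ} {N : ℤ} (hA : ∀ i ∈ Icc k₁ k₂, ℓ i ∈ A)
    (hN : kraftSum L ℓ (Icc k₁ k₂) ≤ N) : (pairMass p L ℓ (Icc k₁ k₂) : EReal) ≤ G p L A k₁ k₂ N :=
  le_sSup ⟨ℓ, hA, hN, rfl⟩

lemma G_le {A : Finset ℕ} {k₁ k₂ : ℕ} {N : ℤ} {x : EReal}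
    (h : ∀ ℓ : ℕ → ℕ, (∀ i ∈ Icc k₁ k₂, ℓ i ∈ A) → kraftSum L ℓ (Icc k₁ k₂) ≤ N →
      (pairMass p L ℓ (Icc k₁ k₂) : EReal) ≤ x) :
    G p L A k₁ k₂ N ≤ x :=
  sSup_le fun _ ⟨ℓ, hA, hN, hx⟩ => hx ▸ h ℓ hA hN

lemma pairMass_add_unpairedMass (s : Finset ℕ) :
    pairMass p L ℓ s + unpairedMass p L ℓ s = (∑ i ∈ s, p i) ^ 2 := by
  rw [pairMass, unpairedMass, ← sum_add_distrib, sq, sum_mul_sum]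
  refine sum_congr rfl fun i _ => ?_
  rw [← sum_add_distrib]
  exact sum_congr rfl fun i' _ => by split_ifs <;> simp

lemma pairMass_congr (h : ∀ i ∈ s, ℓ i = ℓ' i) : pairMass p L ℓ s = pairMass p L ℓ' s :=
  sum_congr rfl fun i hi => sum_congr rfl fun i' hi' => by rw [h i hi, h i' hi']

lemma kraftSum_congr (h : ∀ i ∈ s, ℓ i = ℓ' i) : kraftSum L ℓ s = kraftSum L ℓ' s :=
  sum_congr rfl fun i hi => by rw [h i hi]

lemma kraftSum_union (h : Disjoint S T) : kraftSum L ℓ (S ∪ T) = kraftSum L ℓ S + kraftSum L ℓ T :=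
  sum_union h

lemma kraftSum_eq_card_mul {a : ℕ} (h : ∀ i ∈ s, ℓ i = a) : kraftSum L ℓ s = #s * 2 ^ (L - a) := by
  rw [kraftSum, sum_congr rfl fun i hi => by rw [h i hi], sum_const, nsmul_eq_mul]

lemma pairMass_union_of_forall_add_le (hST : Disjoint S T)
    (hS : ∀ i ∈ S, ∀ i' ∈ S ∪ T, ℓ i + ℓ i' ≤ L) :
    pairMass p L ℓ (S ∪ T) = (∑ i ∈ S, p i) * (∑ i ∈ S ∪ T, p i) +
      (∑ i ∈ T, p i) * (∑ i ∈ S, p i) + pairMass p L ℓ T := by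
  have hrowS : ∀ i ∈ S, (∑ i' ∈ S ∪ T, if ℓ i + ℓ i' ≤ L then p i * p i' else 0) =
      p i * ∑ i' ∈ S ∪ T, p i' := fun i hi => by
    rw [mul_sum]
    exact sum_congr rfl fun i' hi' => if_pos (hS i hi i' hi')
  have hrowT : ∀ i ∈ T, (∑ i' ∈ S ∪ T, if ℓ i + ℓ i' ≤ L then p i * p i' else 0) =
      p i * (∑ i' ∈ S, p i') + ∑ i' ∈ T, if ℓ i + ℓ i' ≤ L then p i * p i' else 0 := by
    intro i hi
    rw [sum_union hST, mul_sum]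
    congr 1
    exact sum_congr rfl fun i' hi' =>
      if_pos (by rw [add_comm]; exact hS i' hi' i (mem_union_right S hi))
  unfold pairMass
  rw [sum_union hST, sum_congr rfl hrowS, sum_congr rfl hrowT, sum_add_distrib, ← sum_mul,
    ← sum_mul, add_assoc]

lemma kraftSum_comp (hρ : Set.BijOn ρ s t) : kraftSum L (ℓ ∘ ρ) s = kraftSum L ℓ t :=
  sum_nbij ρ (fun _ hi => hρ.mapsTo hi) hρ.injOn hρ.surjOn fun _ _ => rfl

lemma unpairedMass_comp_le (hρ : Set.BijOn ρ s t) (hp : ∀ i ∈ s, 0 ≤ p i)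
    (hρp : ∀ i ∈ s, p i ≤ p (ρ i)) : unpairedMass p L (ℓ ∘ ρ) s ≤ unpairedMass p L ℓ t := by
  have himage : s.image ρ = t := coe_injective (by rw [coe_image, hρ.image_eq])
  have hinj : ∀ i ∈ s, ∀ i' ∈ s, ρ i = ρ i' → i = i' := fun _ hi _ hi' h => hρ.injOn hi hi' h
  simp only [unpairedMass, ← himage, sum_image hinj, Function.comp_apply]
  refine sum_le_sum fun i hi => sum_le_sum fun i' hi' => ?_
  split_ifs
  · exact le_rfl
  · exact mul_le_mul (hρp i hi) (hρp i' hi') (hp i' hi') ((hp i hi).trans (hρp i hi))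

end Assignments

lemma StrictMonoOn.le_self_of_le_right {ρ : ℕ → ℕ} {b c : ℕ} (hρ : StrictMonoOn ρ (Set.Icc b c))
    (hc : ∀ i ∈ Set.Icc b c, ρ i ≤ c) {i : ℕ} (hi : i ∈ Set.Icc b c) : ρ i ≤ i := by
  suffices h : ∀ k i, b ≤ i → i + k = c → ρ i ≤ i from h (c - i) i hi.1 (by have := hi.2; omega)
  intro k
  induction k with
  | zero => intro i hb hi; exact (hc i ⟨hb, by omega⟩).trans_eq (by omega)
  | succ k ih =>
    intro i hb hi
    have hstep := hρ (a := i) ⟨hb, by omega⟩ ⟨by omega, by omega⟩ (show i < i + 1 by omega)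
    have := ih (i + 1) (by omega) (by omega)
    omega

lemma exists_bijOn_Icc_le_self {T : Finset ℕ} {b c : ℕ} (hTc : ∀ u ∈ T, u ≤ c)
    (hcard : #T = c + 1 - b) :
    ∃ ρ : ℕ → ℕ, Set.BijOn ρ (Icc b c) T ∧ ∀ i ∈ Icc b c, ρ i ≤ i := by
  have hf : (Set.ofPred (· ∈ T)).Finite := T.finite_toSet
  have hcardf : #hf.toFinset = #T := by congr 1; ext; simp [Set.ofPred]
  have hlt : ∀ i ∈ Set.Icc b c, i - b < #hf.toFinset := fun i ⟨_, hi⟩ => by rw [hcardf]; omega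
  set ρ := fun i => Nat.nth (· ∈ T) (i - b)
  have hmono : StrictMonoOn ρ (Set.Icc b c) := fun i ⟨hi, _⟩ j hj hij =>
    Nat.nth_lt_nth_of_lt_card hf (by omega) (hlt j hj)
  have hmaps : ∀ i ∈ Set.Icc b c, ρ i ∈ T := fun i hi => Nat.nth_mem_of_lt_card hf (hlt i hi)
  refine ⟨ρ, ⟨?_, ?_, ?_⟩, fun i hi => ?_⟩
  · intro i hi; exact hmaps i (by simpa using hi)
  · rw [coe_Icc]; exact hmono.injOn
  · intro u hu
    obtain ⟨n, hn, rfl⟩ := Nat.exists_lt_card_finite_nth_eq hf hu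
    rw [hcardf] at hn
    exact ⟨b + n, by simp only [coe_Icc, Set.mem_Icc]; omega, by simp [ρ]⟩
  · exact hmono.le_self_of_le_right (fun j hj => hTc _ (hmaps j hj)) (by simpa using hi)

lemma Icc_sub_one_union_Icc {k₁ k₂ j : ℕ} (hk₁ : 1 ≤ k₁) (hj : k₁ + j ≤ k₂ + 1) :
    Icc k₁ (k₁ + j - 1) ∪ Icc (k₁ + j) k₂ = Icc k₁ k₂ := by
  ext i
  simp only [mem_union, mem_Icc]
  omega

lemma disjoint_Icc_sub_one_Icc {k₁ k₂ j : ℕ} (hk₁ : 1 ≤ k₁) :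
    Disjoint (Icc k₁ (k₁ + j - 1)) (Icc (k₁ + j) k₂) :=
  disjoint_left.2 fun i hi hi' => by
    simp only [mem_Icc] at hi hi'
    omega

section Splitting

variable {p : ℕ → ℝ} {L : ℕ} {ℓ : ℕ → ℕ} {S T A : Finset ℕ} {l' k₁ k₂ : ℕ}

lemma pairMass_union_eq_sq_sub_unpairedMass (hST : Disjoint S T)
    (hS : ∀ i ∈ S, ∀ i' ∈ S ∪ T, ℓ i + ℓ i' ≤ L) :
    pairMass p L ℓ (S ∪ T) = (∑ i ∈ S ∪ T, p i) ^ 2 - unpairedMass p L ℓ T := by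
  rw [pairMass_union_of_forall_add_le hST hS, sum_union hST]
  linear_combination pairMass_add_unpairedMass (p := p) (L := L) (ℓ := ℓ) T

lemma G_union_singleton_le_iSup (hl' : ∀ a ∈ A ∪ {l'}, l' + a ≤ L)
    (hp : ∀ i ∈ Icc k₁ k₂, 0 ≤ p i) (hanti : AntitoneOn p (Set.Icc k₁ k₂))
    (hk₁ : 1 ≤ k₁) (hk : k₁ ≤ k₂) (N : ℤ) :
    G p L (A ∪ {l'}) k₁ k₂ N
      ≤ ⨆ j ∈ Icc 0 (k₂ - k₁ + 1),
          (G p L A (k₁ + j) k₂ (N - (j : ℤ) * 2 ^ (L - l')) +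
            (((∑ i ∈ Icc k₁ (k₁ + j - 1), p i) * (∑ i ∈ Icc k₁ k₂, p i) +
              (∑ i ∈ Icc (k₁ + j) k₂, p i) * (∑ i ∈ Icc k₁ (k₁ + j - 1), p i) : ℝ) : EReal)) := by
  refine G_le fun ℓ hℓ hN => ?_
  set S := (Icc k₁ k₂).filter (ℓ · = l')
  set T := (Icc k₁ k₂).filter (ℓ · ≠ l')
  have hST : Disjoint S T := disjoint_filter_filter_not _ _ _
  have hSTu : S ∪ T = Icc k₁ k₂ := filter_union_filter_not_eq _ _
  have hcard : #S + #T = k₂ + 1 - k₁ := by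
    rw [← card_union_of_disjoint hST, hSTu, Nat.card_Icc]
  have hTI : ∀ u ∈ T, u ∈ Icc k₁ k₂ := fun u hu => (mem_filter.1 hu).1
  obtain ⟨ρ, hρ, hρle⟩ := exists_bijOn_Icc_le_self (b := k₁ + #S)
    (fun u hu => (mem_Icc.1 (hTI u hu)).2) (by omega)
  set Q := Icc (k₁ + #S) k₂
  have hQ : ∀ i ∈ Q, i ∈ Icc k₁ k₂ := fun i hi => by simp only [Q, mem_Icc] at hi ⊢; omega
  have hvalid : ∀ i ∈ Q, (ℓ ∘ ρ) i ∈ A := fun i hi => by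
    obtain ⟨hiI, hne⟩ := mem_filter.1 (hρ.mapsTo hi)
    simpa [hne] using hℓ _ hiI
  have hbudget : kraftSum L (ℓ ∘ ρ) Q ≤ N - #S * 2 ^ (L - l') := by
    have hsum := kraftSum_union (L := L) (ℓ := ℓ) hST
    rw [hSTu, kraftSum_eq_card_mul fun i hi => (mem_filter.1 hi).2] at hsum
    rw [kraftSum_comp hρ]
    linarith
  -- compressing the indices of `T` onto `Q` only lowers their probabilities
  have hunpaired : unpairedMass p L (ℓ ∘ ρ) Q ≤ unpairedMass p L ℓ T :=
    unpairedMass_comp_le hρ (fun i hi => hp i (hQ i hi)) fun i hi =>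
      hanti (by simpa using hTI _ (hρ.mapsTo hi)) (by simpa using hQ i hi) (hρle i hi)
  have hmass : pairMass p L ℓ (Icc k₁ k₂) ≤ pairMass p L (ℓ ∘ ρ) Q +
      ((∑ i ∈ Icc k₁ (k₁ + #S - 1), p i) * (∑ i ∈ Icc k₁ k₂, p i) +
        (∑ i ∈ Q, p i) * (∑ i ∈ Icc k₁ (k₁ + #S - 1), p i)) := by
    have hS : ∀ i ∈ S, ∀ i' ∈ S ∪ T, ℓ i + ℓ i' ≤ L := fun i hi i' hi' =>
      (mem_filter.1 hi).2 ▸ hl' _ (hℓ i' (hSTu ▸ hi'))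
    rw [← hSTu, pairMass_union_eq_sq_sub_unpairedMass hST hS, hSTu,
      ← Icc_sub_one_union_Icc hk₁ (j := #S) (by omega), sum_union (disjoint_Icc_sub_one_Icc hk₁)]
    linear_combination hunpaired - pairMass_add_unpairedMass (p := p) (L := L) (ℓ := ℓ ∘ ρ) Q
  refine le_iSup₂_of_le #S (by simp only [mem_Icc]; omega) ?_
  calc (pairMass p L ℓ (Icc k₁ k₂) : EReal)
      ≤ ((pairMass p L (ℓ ∘ ρ) Q + _ : ℝ) : EReal) := EReal.coe_le_coe_iff.2 hmass
    _ ≤ _ := by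
      rw [EReal.coe_add]
      exact add_le_add_left (coe_pairMass_le_G hvalid hbudget) _

lemma iSup_le_G_union_singleton (hl' : ∀ a ∈ A ∪ {l'}, l' + a ≤ L) (hk₁ : 1 ≤ k₁)
    (hk : k₁ ≤ k₂) (N : ℤ) :
    ⨆ j ∈ Icc 0 (k₂ - k₁ + 1),
        (G p L A (k₁ + j) k₂ (N - (j : ℤ) * 2 ^ (L - l')) +
          (((∑ i ∈ Icc k₁ (k₁ + j - 1), p i) * (∑ i ∈ Icc k₁ k₂, p i) +
            (∑ i ∈ Icc (k₁ + j) k₂, p i) * (∑ i ∈ Icc k₁ (k₁ + j - 1), p i) : ℝ) : EReal))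
      ≤ G p L (A ∪ {l'}) k₁ k₂ N := by
  refine iSup₂_le fun j hj => ?_
  have hj' : k₁ + j ≤ k₂ + 1 := by simp only [mem_Icc] at hj; omega
  rw [← EReal.le_sub_iff_add_le (.inl (EReal.coe_ne_bot _)) (.inl (EReal.coe_ne_top _))]
  refine G_le fun ℓ hℓ hN => ?_
  rw [EReal.le_sub_iff_add_le (.inl (EReal.coe_ne_bot _)) (.inl (EReal.coe_ne_top _)),
    ← EReal.coe_add]
  set P := Icc k₁ (k₁ + j - 1)
  set Q := Icc (k₁ + j) k₂
  have hPQ : Disjoint P Q := disjoint_Icc_sub_one_Icc hk₁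
  have hsplit : P ∪ Q = Icc k₁ k₂ := Icc_sub_one_union_Icc hk₁ hj'
  set ℓ' : ℕ → ℕ := fun i => if i < k₁ + j then l' else ℓ i
  have hℓ'P : ∀ i ∈ P, ℓ' i = l' := fun i hi => if_pos (by simp only [P, mem_Icc] at hi; omega)
  have hℓ'Q : ∀ i ∈ Q, ℓ' i = ℓ i := fun i hi => if_neg (by simp only [Q, mem_Icc] at hi; omega)
  have hvalid : ∀ i ∈ P ∪ Q, ℓ' i ∈ A ∪ {l'} := fun i hi => by
    rcases mem_union.1 hi with hi | hi
    · simp [hℓ'P i hi]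
    · exact hℓ'Q i hi ▸ mem_union_left _ (hℓ i hi)
  have hbudget : kraftSum L ℓ' (P ∪ Q) ≤ N := by
    rw [kraftSum_union hPQ, kraftSum_eq_card_mul hℓ'P, kraftSum_congr hℓ'Q, Nat.card_Icc,
      show k₁ + j - 1 + 1 - k₁ = j by omega]
    linarith
  have hP : ∀ i ∈ P, ∀ i' ∈ P ∪ Q, ℓ' i + ℓ' i' ≤ L := fun i hi i' hi' =>
    hℓ'P i hi ▸ hl' _ (hvalid i' hi')
  refine (EReal.coe_le_coe_iff.2 (le_of_eq ?_)).trans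
    (coe_pairMass_le_G (hsplit ▸ hvalid) (hsplit ▸ hbudget))
  rw [← hsplit, pairMass_union_of_forall_add_le hPQ hP, pairMass_congr hℓ'Q]
  ring

theorem G_union_singleton_eq_iSup (hl' : ∀ a ∈ A ∪ {l'}, l' + a ≤ L)
    (hp : ∀ i ∈ Icc k₁ k₂, 0 ≤ p i) (hanti : AntitoneOn p (Set.Icc k₁ k₂))
    (hk₁ : 1 ≤ k₁) (hk : k₁ ≤ k₂) (N : ℤ) :
    G p L (A ∪ {l'}) k₁ k₂ N
      = ⨆ j ∈ Icc 0 (k₂ - k₁ + 1),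
          (G p L A (k₁ + j) k₂ (N - (j : ℤ) * 2 ^ (L - l')) +
            (((∑ i ∈ Icc k₁ (k₁ + j - 1), p i) * (∑ i ∈ Icc k₁ k₂, p i) +
              (∑ i ∈ Icc (k₁ + j) k₂, p i) * (∑ i ∈ Icc k₁ (k₁ + j - 1), p i) : ℝ) : EReal)) :=
  (G_union_singleton_le_iSup hl' hp hanti hk₁ hk N).antisymm
    (iSup_le_G_union_singleton hl' hk₁ hk N)

end Splitting

theorem stmt11_general (n L : ℕ) (p : ℕ → ℝ)
    (hp : ∀ i ∈ Finset.Icc 1 n, 0 < p i)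
    (hpm : ∀ i j : ℕ, 1 ≤ i → i ≤ j → j ≤ n → p j ≤ p i)
    (d : ℕ) (hd2 : d ≤ L / 2 - 1)
    (k₁ k₂ : ℕ) (hk1 : 1 ≤ k₁) (hk12 : k₁ ≤ k₂) (hk2 : k₂ ≤ n) (N : ℤ) :
    G p L (Finset.Icc (L / 2 - d + 1) (L / 2 + d) ∪ {L / 2 - d}) k₁ k₂ N
      = ⨆ j ∈ Finset.Icc 0 (k₂ - k₁ + 1),
          (G p L (Finset.Icc (L / 2 - d + 1) (L / 2 + d)) (k₁ + j) k₂
              (N - (j : ℤ) * 2 ^ (L - (L / 2 - d))) +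
            (((∑ i ∈ Finset.Icc k₁ (k₁ + j - 1), p i) * (∑ i ∈ Finset.Icc k₁ k₂, p i) +
              (∑ i ∈ Finset.Icc (k₁ + j) k₂, p i) *
                (∑ i ∈ Finset.Icc k₁ (k₁ + j - 1), p i) : ℝ) : EReal)) := by
  have hl' : ∀ a ∈ Icc (L / 2 - d + 1) (L / 2 + d) ∪ {L / 2 - d}, L / 2 - d + a ≤ L := by
    intro a ha
    simp only [mem_union, mem_Icc, mem_singleton] at ha
    omega
  refine G_union_singleton_eq_iSup hl' (fun i hi => (hp i ?_).le) ?_ hk1 hk12 N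
  · simp only [mem_Icc] at hi ⊢
    omega
  · intro i hi j hj hij
    exact hpm i j (hk1.trans hi.1) hij (hj.2.trans hk2)

/-- (Theorem: going left in the length sequence, to `l' = L/2 - d`.)
For an even width `L`, `1 ≤ d ≤ L/2 - 1`, `A = {L/2-d+1, …, L/2+d}` and
`l' = L/2 - d`, for all `1 ≤ k₁ ≤ k₂ ≤ n` and every integer `N`:
`G(A ∪ {l'}, [k₁,k₂], N) = max_{j ∈ {0,…,k₂-k₁+1}} [ G(A, [k₁+j,k₂], N - j·2^{L-l'})
+ (Σ_{i=k₁}^{k₁+j-1} pᵢ)(Σ_{i=k₁}^{k₂} pᵢ) + (Σ_{i=k₁+j}^{k₂} pᵢ)(Σ_{i=k₁}^{k₁+j-1} pᵢ) ]`. -/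
theorem stmt11 (n L : ℕ) (hL : Even L) (p : ℕ → ℝ)
    (hp : ∀ i ∈ Finset.Icc 1 n, 0 < p i)
    (hps : ∑ i ∈ Finset.Icc 1 n, p i = 1)
    (hpm : ∀ i j : ℕ, 1 ≤ i → i ≤ j → j ≤ n → p j ≤ p i)
    (d : ℕ) (hd1 : 1 ≤ d) (hd2 : d ≤ L / 2 - 1)
    (k₁ k₂ : ℕ) (hk1 : 1 ≤ k₁) (hk12 : k₁ ≤ k₂) (hk2 : k₂ ≤ n) (N : ℤ) :
    G p L (Finset.Icc (L / 2 - d + 1) (L / 2 + d) ∪ {L / 2 - d}) k₁ k₂ N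
      = ⨆ j ∈ Finset.Icc 0 (k₂ - k₁ + 1),
          (G p L (Finset.Icc (L / 2 - d + 1) (L / 2 + d)) (k₁ + j) k₂
              (N - (j : ℤ) * 2 ^ (L - (L / 2 - d))) +
            (((∑ i ∈ Finset.Icc k₁ (k₁ + j - 1), p i) * (∑ i ∈ Finset.Icc k₁ k₂, p i) +
              (∑ i ∈ Finset.Icc (k₁ + j) k₂, p i) *
                (∑ i ∈ Finset.Icc k₁ (k₁ + j - 1), p i) : ℝ) : EReal)) :=
  stmt11_general n L p hp hpm d hd2 k₁ k₂ hk1 hk12 hk2 N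
end

section
/- For all integers n ≥ 2 and α ≥ 1, Z_{n+α} ≥ Z_{α+1} · Z_n. -/
/-- `Z n` : the number of non-decreasing vectors `(ℓ₁,…,ℓ_n)` of positive integers
satisfying `Σ_{j=1}^n 2^{-ℓⱼ} = 1`. -/
noncomputable def Z (n : ℕ) : ℕ :=
  Nat.card {f : Fin n → ℕ // Monotone f ∧ (∀ j, 1 ≤ f j) ∧
    ∑ j, ((2 : ℚ) ^ f j)⁻¹ = 1}

/-!
Graft the second vector onto the last, longest, entry of the first: from `(ℓ₀, …, ℓ_α)` and
`(m₀, …, m_{n-1})` form `(ℓ₀, …, ℓ_{α-1}, ℓ_α + m₀, …, ℓ_α + m_{n-1})`. In the code tree this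
replaces the leaf at depth `ℓ_α` by the tree of the second code, so the result is again monotone
with `Σ 2^{-ℓ} = 1`. The map is injective because `ℓ_α` is recovered from the first `α` entries
through the sum condition. Since `Z` counts with `Nat.card`, the sets must also be shown finite:
the first entry of a monotone vector of length `m + 1` with `Σ 2^{-ℓ} = q > 0` satisfies
`2^{-ℓ₀} ≥ q / (m + 1)`, and induction on the length handles the rest.
-/

open Finset

lemma sum_inv_two_pow_le_of_monotone {m : ℕ} {f : Fin (m + 1) → ℕ} (hf : Monotone f) :
    ∑ j, ((2 : ℚ) ^ f j)⁻¹ ≤ (m + 1) * ((2 : ℚ) ^ f 0)⁻¹ := by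
  have h := sum_le_card_nsmul univ (fun j => ((2 : ℚ) ^ f j)⁻¹) ((2 : ℚ) ^ f 0)⁻¹
    fun j _ => inv_anti₀ (by positivity) (pow_le_pow_right₀ one_le_two (hf (Fin.zero_le j)))
  simpa using h

theorem finite_setOf_monotone_sum_inv_two_pow_eq (m : ℕ) (q : ℚ) :
    {f : Fin m → ℕ | Monotone f ∧ ∑ j, ((2 : ℚ) ^ f j)⁻¹ = q}.Finite := by
  induction m generalizing q with
  | zero => exact Set.toFinite _
  | succ m ih =>
    rcases le_or_gt q 0 with hq | hq
    · refine Set.finite_empty.subset fun f ⟨_, hsum⟩ => ?_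
      have : 0 < ∑ j, ((2 : ℚ) ^ f j)⁻¹ := sum_pos (fun _ _ => by positivity) univ_nonempty
      linarith
    obtain ⟨A, hA⟩ := exists_pow_lt_of_lt_one (div_pos hq (by positivity : (0 : ℚ) < m + 1))
      (by norm_num : (2⁻¹ : ℚ) < 1)
    let T := ⋃ a ∈ Set.Iic A, {a} ×ˢ {g : Fin m → ℕ | Monotone g ∧
      ∑ j, ((2 : ℚ) ^ g j)⁻¹ = q - ((2 : ℚ) ^ a)⁻¹}
    have hT : T.Finite := (Set.finite_Iic A).biUnion fun a _ => (Set.finite_singleton a).prod (ih _)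
    refine (hT.image fun p => Fin.cons p.1 p.2).subset fun f ⟨hf, hsum⟩ => ?_
    refine ⟨(f 0, Fin.tail f), ?_, Fin.cons_self_tail f⟩
    have hf0 : f 0 ≤ A := by
      by_contra! h
      have h1 := sum_inv_two_pow_le_of_monotone hf
      have h2 : ((2 : ℚ) ^ f 0)⁻¹ < q / (m + 1) := by
        calc ((2 : ℚ) ^ f 0)⁻¹ = 2⁻¹ ^ f 0 := (inv_pow _ _).symm
          _ ≤ 2⁻¹ ^ A := pow_le_pow_of_le_one (by norm_num) (by norm_num) h.le
          _ < q / (m + 1) := hA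
      rw [lt_div_iff₀ (by positivity)] at h2
      linarith
    simp only [T, Set.mem_iUnion, Set.mem_prod, Set.mem_singleton_iff, Set.mem_ofPred_eq]
    refine ⟨f 0, hf0, rfl, hf.comp (Fin.strictMono_succ.monotone), ?_⟩
    rw [← hsum, Fin.sum_univ_succ]
    simp [Fin.tail]

lemma Fin.monotone_append {α : Type*} [Preorder α] {m n : ℕ} {u : Fin m → α} {v : Fin n → α}
    (hu : Monotone u) (hv : Monotone v) (huv : ∀ i j, u i ≤ v j) : Monotone (Fin.append u v) := by
  intro i j hij
  induction i using Fin.addCases <;> induction j using Fin.addCases <;>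
    simp only [Fin.append_left, Fin.append_right] <;>
    simp only [Fin.le_def, Fin.val_castAdd, Fin.val_natAdd] at hij
  · exact hu (Fin.le_def.mpr hij)
  · exact huv _ _
  · omega
  · exact hv (Fin.le_def.mpr (by omega))

section
variable {a b : ℕ}

def graft (f : Fin (a + 1) → ℕ) (g : Fin b → ℕ) : Fin (a + b) → ℕ :=
  Fin.append (Fin.init f) fun j => f (Fin.last a) + g j

lemma monotone_graft {f : Fin (a + 1) → ℕ} {g : Fin b → ℕ} (hf : Monotone f) (hg : Monotone g) :
    Monotone (graft f g) :=
  Fin.monotone_append (hf.comp Fin.strictMono_castSucc.monotone)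
    (fun _ _ h => Nat.add_le_add_left (hg h) _)
    fun _ _ => (hf (Fin.le_last _)).trans (Nat.le_add_right _ _)

lemma one_le_graft {f : Fin (a + 1) → ℕ} (hf : ∀ j, 1 ≤ f j) (g : Fin b → ℕ) (j : Fin (a + b)) :
    1 ≤ graft f g j := by
  induction j using Fin.addCases with
  | left i => simpa [graft, Fin.init] using hf i.castSucc
  | right j => simpa [graft] using Nat.le_add_right_of_le (hf (Fin.last a))

lemma sum_inv_two_pow_graft (f : Fin (a + 1) → ℕ) (g : Fin b → ℕ) :
    ∑ j, ((2 : ℚ) ^ graft f g j)⁻¹ =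
      ∑ j, ((2 : ℚ) ^ f j)⁻¹ + ((2 : ℚ) ^ f (Fin.last a))⁻¹ * (∑ j, ((2 : ℚ) ^ g j)⁻¹ - 1) := by
  simp [graft, Fin.sum_univ_add, Fin.sum_univ_castSucc, pow_add, Fin.init, ← Finset.sum_mul]
  ring

lemma eq_and_eq_of_graft_eq {f f' : Fin (a + 1) → ℕ} {g g' : Fin b → ℕ}
    (hsum : ∑ j, ((2 : ℚ) ^ f j)⁻¹ = ∑ j, ((2 : ℚ) ^ f' j)⁻¹) (h : graft f g = graft f' g') :
    f = f' ∧ g = g' := by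
  have hinit : Fin.init f = Fin.init f' := funext fun i => by
    simpa [graft] using congrFun h (Fin.castAdd b i)
  have hlast : f (Fin.last a) = f' (Fin.last a) := by
    rw [Fin.sum_univ_castSucc, Fin.sum_univ_castSucc] at hsum
    have hinit' (i : Fin a) : f i.castSucc = f' i.castSucc := congrFun hinit i
    simp only [hinit', add_right_inj, inv_inj] at hsum
    exact Nat.pow_right_injective le_rfl (by exact_mod_cast hsum)
  refine ⟨by rw [← Fin.snoc_init_self f, ← Fin.snoc_init_self f', hinit, hlast], funext fun j => ?_⟩
  have := congrFun h (Fin.natAdd a j)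
  simp only [graft, Fin.append_right, hlast] at this
  omega

end

def KraftTuple (n : ℕ) : Type :=
  {f : Fin n → ℕ // Monotone f ∧ (∀ j, 1 ≤ f j) ∧ ∑ j, ((2 : ℚ) ^ f j)⁻¹ = 1}

namespace KraftTuple

instance (n : ℕ) : Finite (KraftTuple n) :=
  ((finite_setOf_monotone_sum_inv_two_pow_eq n 1).subset fun _ hf => ⟨hf.1, hf.2.2⟩).to_subtype

variable {a b : ℕ}

def graft (f : KraftTuple (a + 1)) (g : KraftTuple b) : KraftTuple (a + b) :=
  ⟨_root_.graft f.1 g.1, monotone_graft f.2.1 g.2.1, one_le_graft f.2.2.1 g.1, by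
    rw [sum_inv_two_pow_graft, f.2.2.2, g.2.2.2, sub_self, mul_zero, add_zero]⟩

lemma graft_injective :
    Function.Injective fun p : KraftTuple (a + 1) × KraftTuple b => p.1.graft p.2 := by
  rintro ⟨f, g⟩ ⟨f', g'⟩ h
  obtain ⟨hf, hg⟩ := eq_and_eq_of_graft_eq (f.2.2.2.trans f'.2.2.2.symm) (congrArg Subtype.val h)
  exact Prod.ext (Subtype.ext hf) (Subtype.ext hg)

theorem card_mul_card_le_card_add (a b : ℕ) :
    Nat.card (KraftTuple (a + 1)) * Nat.card (KraftTuple b) ≤ Nat.card (KraftTuple (a + b)) := by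
  rw [← Nat.card_prod]
  exact Nat.card_le_card_of_injective _ graft_injective

end KraftTuple

theorem stmt14_general (n α : ℕ) :
    Z (α + 1) * Z n ≤ Z (n + α) := by
  rw [Nat.add_comm n α]
  exact KraftTuple.card_mul_card_le_card_add α n

/-- For all integers `n ≥ 2` and `α ≥ 1`,
`Z_{n+α} ≥ Z_{α+1} · Z_n`. -/
theorem stmt14 (n α : ℕ) (hn : 2 ≤ n) (hα : 1 ≤ α) :
    Z (α + 1) * Z n ≤ Z (n + α) :=
  stmt14_general n α
end
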